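/- Let k ∈ ℝ, let m be an integer, and let r_s > 0, z_t, z_s ∈ ℝ be fixed. Then at every r_t > 0 with (r_t, z_t) ≠ (r_s, z_s), the function r_t ↦ g¹_m(r_t, z_t, r_s, z_s) = ∫₀^{2π} (e^{ikρ(φ)}/(4πρ(φ)))·e^{−imφ} dφ is differentiable with derivative ∂g¹_m/∂r_t = (1/(4π)) ∫₀^{2π} ((ikρ(φ)·e^{ikρ(φ)} − e^{ikρ(φ)})·(r_t − r_s cos φ)/ρ(φ)³)·e^{−imφ} dφ. -/

import Mathlib

open Real MeasureTheory

/-- `ρ(φ) = √(r_t² + r_s² − 2 r_t r_s cos φ + (z_t − z_s)²)`. -/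
noncomputable def rho (rt rs zt zs φ : ℝ) : ℝ :=
  Real.sqrt (rt ^ 2 + rs ^ 2 - 2 * rt * rs * Real.cos φ + (zt - zs) ^ 2)

/-- The modal Green's function `g¹_m(r_t, z_t, r_s, z_s)`. -/
noncomputable def g1 (k : ℝ) (m : ℤ) (rt zt rs zs : ℝ) : ℂ :=
  ∫ φ in (0:ℝ)..(2 * Real.pi),
    Complex.exp (Complex.I * (k * rho rt rs zt zs φ)) / (4 * Real.pi * rho rt rs zt zs φ) *
      Complex.exp (-Complex.I * m * φ)

/-!
Differentiate under the integral sign. Since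
`ρ² = (r_t − r_s)² + (z_t − z_s)² + 2 r_t r_s (1 − cos φ)`, the distance `ρ` stays positive for all
`φ` as long as `r_t > 0` and `(r_t, z_t) ≠ (r_s, z_s)`, an open condition on `r_t`. On that set the
integrand is differentiable in `r_t` with a derivative jointly continuous in `(r_t, φ)`, hence
bounded on a compact neighbourhood of `{r_t} × [0, 2π]`, which supplies the dominating function.
-/

open Set Filter Topology Function

theorem intervalIntegral.hasDerivAt_integral_of_continuousOn {E : Type*} [NormedAddCommGroup E]
    [NormedSpace ℝ E] {F F' : ℝ → ℝ → E} {x₀ a b : ℝ} {s : Set ℝ} (hs : s ∈ 𝓝 x₀)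
    (hF : ∀ x ∈ s, ContinuousOn (F x) (uIcc a b))
    (hF' : ContinuousOn (uncurry F') (s ×ˢ uIcc a b))
    (h_diff : ∀ x ∈ s, ∀ t ∈ uIcc a b, HasDerivAt (F · t) (F' x t) x) :
    HasDerivAt (fun x => ∫ t in a..b, F x t) (∫ t in a..b, F' x₀ t) x₀ := by
  obtain ⟨δ, hδ, hδs⟩ := Metric.nhds_basis_closedBall.mem_iff.1 hs
  obtain ⟨C, hC⟩ := (isCompact_closedBall x₀ δ |>.prod isCompact_uIcc).exists_bound_of_continuousOn
    (hF'.mono (prod_mono hδs subset_rfl))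
  have hx₀ : x₀ ∈ s := mem_of_mem_nhds hs
  refine (intervalIntegral.hasDerivAt_integral_of_dominated_loc_of_deriv_le (bound := fun _ => C)
    (Metric.ball_mem_nhds x₀ hδ) ?_ ((hF x₀ hx₀).intervalIntegrable)
    ?_ ?_ intervalIntegrable_const ?_).2
  · filter_upwards [hs] with x hx
    exact (hF x hx).aestronglyMeasurable measurableSet_uIcc |>.mono_set uIoc_subset_uIcc
  · have : ContinuousOn (F' x₀) (uIcc a b) :=
      hF'.comp (Continuous.prodMk_right x₀).continuousOn fun t ht => ⟨hx₀, ht⟩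
    exact this.aestronglyMeasurable measurableSet_uIcc |>.mono_set uIoc_subset_uIcc
  · exact ae_of_all _ fun t ht x hx =>
      hC (x, t) ⟨Metric.ball_subset_closedBall hx, uIoc_subset_uIcc ht⟩
  · exact ae_of_all _ fun t ht x hx =>
      h_diff x (hδs (Metric.ball_subset_closedBall hx)) t (uIoc_subset_uIcc ht)

lemma rho_pos {x rs zt zs : ℝ} (hx : 0 ≤ x) (hrs : 0 ≤ rs) (hne : (x, zt) ≠ (rs, zs)) (φ : ℝ) :
    0 < rho x rs zt zs φ := by
  have hdist : 0 < (x - rs) ^ 2 + (zt - zs) ^ 2 := by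
    by_contra! h
    exact hne (Prod.ext (by nlinarith [sq_nonneg (x - rs), sq_nonneg (zt - zs)])
      (by nlinarith [sq_nonneg (x - rs), sq_nonneg (zt - zs)]))
  refine Real.sqrt_pos.2 ?_
  nlinarith [mul_nonneg (mul_nonneg hx hrs) (sub_nonneg.2 (Real.cos_le_one φ))]

@[fun_prop]
lemma Continuous.rho {α : Type*} [TopologicalSpace α] {rt rs zt zs φ : α → ℝ}
    (hrt : Continuous rt) (hrs : Continuous rs) (hzt : Continuous zt) (hzs : Continuous zs)
    (hφ : Continuous φ) :
    Continuous fun a => _root_.rho (rt a) (rs a) (zt a) (zs a) (φ a) := by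
  unfold _root_.rho; fun_prop

lemma hasDerivAt_rho {x rs zt zs φ : ℝ} (hρ : 0 < rho x rs zt zs φ) :
    HasDerivAt (rho · rs zt zs φ) ((x - rs * Real.cos φ) / rho x rs zt zs φ) x := by
  have hq : HasDerivAt (fun y => y ^ 2 + rs ^ 2 - 2 * y * rs * Real.cos φ + (zt - zs) ^ 2)
      (2 * x - 2 * rs * Real.cos φ) x := by
    refine ((((hasDerivAt_pow 2 x).add_const (rs ^ 2)).sub
      ((((hasDerivAt_id' x).const_mul 2).mul_const rs).mul_const (Real.cos φ))).add_const
        ((zt - zs) ^ 2)).congr_deriv ?_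
    norm_num
  refine (hq.sqrt (Real.sqrt_pos.1 hρ).ne').congr_deriv ?_
  unfold rho
  field_simp

lemma hasDerivAt_helmholtzGreen (k r : ℝ) (hr : r ≠ 0) :
    HasDerivAt (fun r : ℝ => Complex.exp (Complex.I * (k * r)) / (4 * π * r))
      ((Complex.I * (k * r) * Complex.exp (Complex.I * (k * r)) - Complex.exp (Complex.I * (k * r)))
        / (4 * π * r ^ 2)) r := by
  have hexp := (((hasDerivAt_id r).ofReal_comp.const_mul (k : ℂ)).const_mul Complex.I).cexp
  have hden := (hasDerivAt_id r).ofReal_comp.const_mul (4 * (π : ℂ))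
  have hr' : (r : ℂ) ≠ 0 := by exact_mod_cast hr
  refine (hexp.div hden (by simp [hr', Real.pi_ne_zero])).congr_deriv ?_
  simp only [id, Complex.ofReal_one]
  field_simp

lemma hasDerivAt_g1_integrand {k : ℝ} {m : ℤ} {x rs zt zs φ : ℝ} (hρ : 0 < rho x rs zt zs φ) :
    HasDerivAt
      (fun y : ℝ => Complex.exp (Complex.I * (k * rho y rs zt zs φ)) /
          (4 * π * rho y rs zt zs φ) * Complex.exp (-Complex.I * m * φ))
      ((1 / (4 * π)) *
        (((Complex.I * (k * rho x rs zt zs φ) * Complex.exp (Complex.I * (k * rho x rs zt zs φ)) -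
            Complex.exp (Complex.I * (k * rho x rs zt zs φ))) *
          ((x - rs * Real.cos φ) / (rho x rs zt zs φ) ^ 3)) *
        Complex.exp (-Complex.I * m * φ))) x := by
  refine (((hasDerivAt_helmholtzGreen k _ hρ.ne').scomp x (hasDerivAt_rho hρ)).mul_const
    (Complex.exp (-Complex.I * m * φ))).congr_deriv ?_
  have : (rho x rs zt zs φ : ℂ) ≠ 0 := by exact_mod_cast hρ.ne'
  simp only [Complex.real_smul]
  push_cast
  field_simp

theorem stmt_18 (k : ℝ) (m : ℤ) (rs zt zs : ℝ) (hrs : 0 < rs) :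
    ∀ rt : ℝ, 0 < rt → (rt, zt) ≠ (rs, zs) →
      HasDerivAt (fun x : ℝ => g1 k m x zt rs zs)
        ((1 / (4 * Real.pi)) * ∫ φ in (0:ℝ)..(2 * Real.pi),
          ((Complex.I * (k * rho rt rs zt zs φ) *
                Complex.exp (Complex.I * (k * rho rt rs zt zs φ)) -
              Complex.exp (Complex.I * (k * rho rt rs zt zs φ))) *
            ((rt - rs * Real.cos φ) / (rho rt rs zt zs φ) ^ 3)) *
          Complex.exp (-Complex.I * m * φ)) rt := by
  intro rt hrt hne
  set s := {x : ℝ | 0 < x ∧ (x, zt) ≠ (rs, zs)}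
  have hs : s ∈ 𝓝 rt :=
    (isOpen_Ioi.inter (isOpen_ne_fun (by fun_prop) continuous_const)).mem_nhds ⟨hrt, hne⟩
  have hρ (x : ℝ) (hx : x ∈ s) (φ : ℝ) : 0 < rho x rs zt zs φ := rho_pos hx.1.le hrs.le hx.2 φ
  rw [← intervalIntegral.integral_const_mul]
  refine intervalIntegral.hasDerivAt_integral_of_continuousOn hs ?_ ?_
    (fun x hx φ _ => hasDerivAt_g1_integrand (hρ x hx φ))
  · intro x hx
    refine Continuous.continuousOn ?_
    have : ∀ φ, (rho x rs zt zs φ : ℂ) ≠ 0 := fun φ => by exact_mod_cast (hρ x hx φ).ne'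
    fun_prop (disch := simp [this])
  · rintro ⟨x, φ⟩ ⟨hx, -⟩
    have : (rho x rs zt zs φ : ℂ) ≠ 0 := by exact_mod_cast (hρ x hx φ).ne'
    refine ContinuousAt.continuousWithinAt ?_
    fun_prop (disch := simp [this])
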